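/- arXiv:1912.05039 — 4 statements merged into one kernel-verified Lean document; each statement's English description precedes it below -/
import Mathlib

section
/- Let ν > 0 and let F : ℂ → ℂ be an entire function with Taylor expansion F(z) = ∑_{j=0}^∞ a_j z^j. Then, as an identity in [0, ∞], ∫_ℂ |F(z)|² e^{−ν|z|²} dλ(z) = (π/ν) ∑_{j=0}^∞ (j!/ν^j) |a_j|². -/
/-! In polar coordinates `z = r e^{iθ}`, expanding `|F|² = F · conj F` as an absolutely convergent
double series on the circle of radius `r` and using the orthogonality of the `e^{ijθ}` gives
`∫_{-π}^{π} |F(r e^{iθ})|² dθ = 2π ∑ |a_j|² r^{2j}`. All remaining terms are nonnegative, so the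
radial integral commutes with the sum in `[0, ∞]`, and each term is the Gaussian moment
`∫_0^∞ r^{2j+1} e^{-νr²} dr = j! / (2 ν^{j+1})`. -/

open MeasureTheory Set Real ComplexConjugate
open scoped Nat

theorem hasSum_ite_fst_eq_snd_iff {α M : Type*} [AddCommMonoid M] [TopologicalSpace M]
    [DecidableEq α] {f : α → M} {s : M} :
    HasSum (fun p : α × α => if p.1 = p.2 then f p.1 else 0) s ↔ HasSum f s := by
  have hdiag : Function.Injective fun a : α => (a, a) := fun _ _ h => congrArg Prod.fst h
  rw [← hdiag.hasSum_iff]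
  · simp [Function.comp_def]
  · rintro ⟨a, b⟩ hab
    exact if_neg fun h : a = b => hab ⟨a, by simp [h]⟩

theorem hasSum_mul_conj_of_summable_norm {ι : Type*} {f : ι → ℂ}
    (hf : Summable fun i => ‖f i‖) :
    HasSum (fun p : ι × ι => f p.1 * conj (f p.2)) ((‖∑' i, f i‖ ^ 2 : ℝ) : ℂ) := by
  have hprod : Summable fun p : ι × ι => f p.1 * conj (f p.2) :=
    (hf.mul_of_nonneg hf (fun _ => norm_nonneg _) (fun _ => norm_nonneg _)).of_norm_bounded
      fun p => by rw [norm_mul, Complex.norm_conj]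
  rw [Complex.ofReal_pow, ← Complex.mul_conj']
  exact HasSum.mul (f := f) (g := fun i => conj (f i)) hf.of_norm.hasSum
    (Complex.hasSum_conj'.mpr hf.of_norm.hasSum) hprod

theorem integral_cexp_int_mul_I_mul (n : ℤ) :
    ∫ θ in (-π)..π, Complex.exp (n * Complex.I * θ) = if n = 0 then (2 * π : ℂ) else 0 := by
  split_ifs with hn
  · simp [hn]
    ring
  have hc : (n : ℂ) * Complex.I ≠ 0 := by simp [hn]
  have hperiod : Complex.exp (n * Complex.I * π) = Complex.exp (n * Complex.I * (-π : ℝ)) :=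
    Complex.exp_eq_exp_iff_exists_int.mpr ⟨n, by push_cast; ring⟩
  rw [integral_exp_mul_complex hc, hperiod, sub_self, zero_div]

theorem integral_mul_cexp_mul_conj_mul_cexp (c d : ℂ) (j k : ℕ) :
    ∫ θ in (-π)..π,
        c * Complex.exp (j * Complex.I * θ) * conj (d * Complex.exp (k * Complex.I * θ)) =
      if j = k then 2 * π * c * conj d else 0 := by
  have hintegrand : ∀ θ : ℝ, c * Complex.exp (j * Complex.I * θ) *
      conj (d * Complex.exp (k * Complex.I * θ)) =
        c * conj d * Complex.exp (((j - k : ℤ) : ℂ) * Complex.I * θ) := by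
    intro θ
    rw [map_mul, ← Complex.exp_conj, mul_mul_mul_comm, ← Complex.exp_add]
    simp only [map_mul, map_natCast, Complex.conj_I, Complex.conj_ofReal]
    push_cast
    ring_nf
  simp_rw [hintegrand, intervalIntegral.integral_const_mul, integral_cexp_int_mul_I_mul,
    sub_eq_zero, Nat.cast_inj]
  split_ifs <;> ring

theorem hasSum_integral_norm_sq_tsum_mul_cexp {c : ℕ → ℂ} (hc : Summable fun j => ‖c j‖) :
    HasSum (fun j => 2 * π * ‖c j‖ ^ 2)
      (∫ θ in (-π)..π, ‖∑' j, c j * Complex.exp (j * Complex.I * θ)‖ ^ 2) := by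
  have norm_term : ∀ (j : ℕ) (θ : ℝ), ‖c j * Complex.exp (j * Complex.I * θ)‖ = ‖c j‖ :=
    fun j θ => by
      simp [mul_right_comm _ Complex.I, ← Complex.ofReal_natCast, ← Complex.ofReal_mul]
  have hterms : HasSum
      (fun p : ℕ × ℕ => ∫ θ in (-π)..π, c p.1 * Complex.exp (p.1 * Complex.I * θ) *
        conj (c p.2 * Complex.exp (p.2 * Complex.I * θ)))
      (∫ θ in (-π)..π, ((‖∑' j, c j * Complex.exp (j * Complex.I * θ)‖ ^ 2 : ℝ) : ℂ)) :=
    intervalIntegral.hasSum_integral_of_dominated_convergence (fun p _ => ‖c p.1‖ * ‖c p.2‖)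
      (fun p => by fun_prop)
      (fun p => ae_of_all _ fun θ _ => by rw [norm_mul, Complex.norm_conj, norm_term, norm_term])
      (ae_of_all _ fun _ _ =>
        hc.mul_of_nonneg hc (fun _ => norm_nonneg _) (fun _ => norm_nonneg _))
      intervalIntegrable_const
      (ae_of_all _ fun θ _ => hasSum_mul_conj_of_summable_norm
        (f := fun j => c j * Complex.exp (j * Complex.I * θ)) (by simpa only [norm_term] using hc))
  simp only [integral_mul_cexp_mul_conj_mul_cexp, intervalIntegral.integral_ofReal] at hterms
  have hdiag : (fun p : ℕ × ℕ => if p.1 = p.2 then 2 * (π : ℂ) * c p.1 * conj (c p.2) else 0) =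
      fun p => if p.1 = p.2 then ((2 * π * ‖c p.1‖ ^ 2 : ℝ) : ℂ) else 0 := by
    ext ⟨j, k⟩
    split_ifs with hjk
    · rw [← hjk, mul_assoc, Complex.mul_conj']
      push_cast
      rfl
    · rfl
  rw [hdiag] at hterms
  exact Complex.hasSum_ofReal.mp
    ((hasSum_ite_fst_eq_snd_iff (f := fun j => ((2 * π * ‖c j‖ ^ 2 : ℝ) : ℂ))).mp hterms)

theorem lintegral_Ioo_norm_sq_eq_tsum {F : ℂ → ℂ} (hF : Continuous F) {a : ℕ → ℂ} {r : ℝ}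
    (hr : 0 ≤ r) (ha : ∀ z : ℂ, ‖z‖ = r → HasSum (fun j => a j * z ^ j) (F z)) :
    ∫⁻ θ in Ioo (-π) π, ENNReal.ofReal (‖F (r * Complex.exp (θ * Complex.I))‖ ^ 2) =
      ∑' j, ENNReal.ofReal (2 * π * ‖a j‖ ^ 2 * r ^ (2 * j)) := by
  have hnorm : ∀ θ : ℝ, ‖(r : ℂ) * Complex.exp (θ * Complex.I)‖ = r := fun θ => by
    simp [Complex.norm_exp_ofReal_mul_I, abs_of_nonneg hr]
  have hseries : ∀ θ : ℝ, F (r * Complex.exp (θ * Complex.I)) =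
      ∑' j, a j * r ^ j * Complex.exp (j * Complex.I * θ) := fun θ => by
    rw [← (ha _ (hnorm θ)).tsum_eq]
    congr 1 with j
    rw [mul_pow, ← Complex.exp_nat_mul]
    ring_nf
  have hsummable : Summable fun j => ‖a j * r ^ j‖ := by
    simpa using (ha r (by simp [abs_of_nonneg hr])).summable.norm
  have hparseval := hasSum_integral_norm_sq_tsum_mul_cexp hsummable
  simp_rw [← hseries] at hparseval
  have hint : IntegrableOn (fun θ : ℝ => ‖F (r * Complex.exp (θ * Complex.I))‖ ^ 2)
      (Ioc (-π) π) :=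
    (by fun_prop : Continuous _).integrableOn_Icc.mono_set Ioc_subset_Icc_self
  rw [Measure.restrict_congr_set Ioo_ae_eq_Ioc,
    ← ofReal_integral_eq_lintegral_ofReal hint (ae_of_all _ fun _ => by positivity),
    ← intervalIntegral.integral_of_le (by linarith [pi_pos]), ← hparseval.tsum_eq,
    ENNReal.ofReal_tsum_of_nonneg (fun _ => by positivity) hparseval.summable]
  congr 1 with j
  rw [norm_mul, norm_pow, Complex.norm_real, Real.norm_of_nonneg hr]
  ring_nf

theorem lintegral_Ioo_mul_norm_sq_mul_gaussian_eq_tsum {F : ℂ → ℂ} (hF : Continuous F)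
    {a : ℕ → ℂ} (ν : ℝ) {r : ℝ} (hr : 0 ≤ r)
    (ha : ∀ z : ℂ, ‖z‖ = r → HasSum (fun j => a j * z ^ j) (F z)) :
    ∫⁻ θ in Ioo (-π) π, ENNReal.ofReal r *
      ENNReal.ofReal (‖F (r * Complex.exp (θ * Complex.I))‖ ^ 2 *
        exp (-ν * ‖(r : ℂ) * Complex.exp (θ * Complex.I)‖ ^ 2)) =
      ∑' j, ENNReal.ofReal (2 * π * ‖a j‖ ^ 2) *
        ENNReal.ofReal (r ^ (2 * j + 1) * exp (-ν * r ^ 2)) := by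
  have hweight : ∀ θ : ℝ, ENNReal.ofReal r *
      ENNReal.ofReal (‖F (r * Complex.exp (θ * Complex.I))‖ ^ 2 *
        exp (-ν * ‖(r : ℂ) * Complex.exp (θ * Complex.I)‖ ^ 2)) =
      ENNReal.ofReal (r * exp (-ν * r ^ 2)) *
        ENNReal.ofReal (‖F (r * Complex.exp (θ * Complex.I))‖ ^ 2) := fun θ => by
    rw [← ENNReal.ofReal_mul hr, ← ENNReal.ofReal_mul (by positivity), norm_mul,
      Complex.norm_exp_ofReal_mul_I, Complex.norm_real, Real.norm_of_nonneg hr]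
    ring_nf
  simp_rw [hweight]
  rw [lintegral_const_mul' _ _ ENNReal.ofReal_ne_top, lintegral_Ioo_norm_sq_eq_tsum hF hr ha,
    ← ENNReal.tsum_mul_left]
  congr 1 with j
  rw [← ENNReal.ofReal_mul (by positivity), ← ENNReal.ofReal_mul (by positivity)]
  ring_nf

theorem lintegral_Ioi_pow_mul_exp_neg_mul_sq {b : ℝ} (hb : 0 < b) (j : ℕ) :
    ∫⁻ r in Ioi (0 : ℝ), ENNReal.ofReal (r ^ (2 * j + 1) * exp (-b * r ^ 2)) =
      ENNReal.ofReal (j ! / (2 * b ^ (j + 1))) := by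
  have hrpow : EqOn (fun r : ℝ => r ^ ((2 * j + 1 : ℕ) : ℝ) * exp (-b * r ^ (2 : ℝ)))
      (fun r => r ^ (2 * j + 1) * exp (-b * r ^ 2)) (Ioi 0) := fun r _ => by
    simp only [Real.rpow_natCast, ← Real.rpow_ofNat]
  have hq : (-1 : ℝ) < (2 * j + 1 : ℕ) := by linarith [(2 * j + 1 : ℕ).cast_nonneg (α := ℝ)]
  have hint : IntegrableOn (fun r : ℝ => r ^ (2 * j + 1) * exp (-b * r ^ 2)) (Ioi 0) :=
    (integrableOn_rpow_mul_exp_neg_mul_rpow hq two_pos hb).congr_fun hrpow measurableSet_Ioi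
  rw [← ofReal_integral_eq_lintegral_ofReal hint
    ((ae_restrict_iff' measurableSet_Ioi).mpr (ae_of_all _ fun r (hr : 0 < r) => by positivity)),
    ← setIntegral_congr_fun measurableSet_Ioi hrpow,
    integral_rpow_mul_exp_neg_mul_rpow two_pos hq hb]
  have hexponent : ((2 * j + 1 : ℕ) + 1 : ℝ) / 2 = j + 1 := by
    push_cast
    ring
  rw [hexponent, neg_div, hexponent, Real.Gamma_nat_eq_factorial, Real.rpow_neg hb.le,
    ← Nat.cast_add_one, Real.rpow_natCast]
  congr 1
  field_simp

theorem lintegral_eq_lintegral_Ioi_lintegral_Ioo_polar {g : ℂ → ENNReal} (hg : Measurable g) :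
    ∫⁻ z, g z = ∫⁻ r in Ioi 0, ∫⁻ θ in Ioo (-π) π,
      ENNReal.ofReal r * g (r * Complex.exp (θ * Complex.I)) := by
  have hpolar : ∀ p : ℝ × ℝ,
      Complex.polarCoord.symm p = p.1 * Complex.exp (p.2 * Complex.I) := by
    intro p
    rw [Complex.polarCoord_symm_apply, Complex.exp_mul_I]
    push_cast
    rfl
  rw [← Complex.lintegral_comp_polarCoord_symm, polarCoord_target, Measure.volume_eq_prod,
    ← Measure.prod_restrict, lintegral_prod]
  · simp only [smul_eq_mul, hpolar]
  · simp only [smul_eq_mul, hpolar]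
    exact ((ENNReal.measurable_ofReal.comp measurable_fst).mul (hg.comp (by fun_prop))).aemeasurable

theorem stmt3 (ν : ℝ) (hν : 0 < ν) (F : ℂ → ℂ) (a : ℕ → ℂ)
    (hF : Differentiable ℂ F)
    (ha : ∀ z : ℂ, HasSum (fun j : ℕ => a j * z ^ j) (F z)) :
    ∫⁻ z : ℂ, ENNReal.ofReal (‖F z‖ ^ 2 * Real.exp (-ν * ‖z‖ ^ 2)) =
      ENNReal.ofReal (Real.pi / ν) *
        ∑' j : ℕ, ENNReal.ofReal ((j.factorial : ℝ) / ν ^ j * ‖a j‖ ^ 2) := by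
  have hFc : Continuous F := hF.continuous
  rw [lintegral_eq_lintegral_Ioi_lintegral_Ioo_polar (by fun_prop),
    setLIntegral_congr_fun measurableSet_Ioi fun r hr =>
      lintegral_Ioo_mul_norm_sq_mul_gaussian_eq_tsum hFc ν (le_of_lt hr) fun z _ => ha z,
    lintegral_tsum fun j => by fun_prop, ← ENNReal.tsum_mul_left]
  congr 1 with j
  rw [lintegral_const_mul' _ _ ENNReal.ofReal_ne_top, lintegral_Ioi_pow_mul_exp_neg_mul_sq hν,
    ← ENNReal.ofReal_mul (by positivity), ← ENNReal.ofReal_mul (by positivity)]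
  congr 1
  field_simp
  ring
end

section
/- Let ν > 0, t > 0 and z, w ∈ ℂ. Then the series ∑_{k=0}^∞ e^{−ν t k} L_k(ν |z − w|²) converges and the heat kernel K_ν(t,z,w) := (π/ν) e^{ν z · conj(w)} ∑_{k=0}^∞ e^{−ν t k} L_k(ν |z − w|²) admits the closed form K_ν(t,z,w) = (π e^{ν z · conj(w)} / (ν (1 − e^{−ν t}))) · exp( −ν |z − w|² e^{−ν t} / (1 − e^{−ν t}) ). -/
/-!
With `r = e^{-νt} ∈ (0, 1)` the series is the Laguerre generating function
`∑ rⁿ Lₙ(x) = (1 - r)⁻¹ exp (-x r / (1 - r))`, valid for `|r| < 1`. Expanding `Lₙ` turns the left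
side into an absolutely convergent double series over `(k, m)` with `n = k + m`; summing over `m`
first with the negative binomial series `∑ₘ C(m + k, k) rᵐ = (1 - r)^{-(k+1)}` leaves the exponential
series of `-x r / (1 - r)`.
-/

open MeasureTheory

/-- The Laguerre polynomial `L_n(x) = ∑_{k=0}^n binom(n,k) (−x)^k / k!`. -/
noncomputable def laguerre (n : ℕ) (x : ℝ) : ℝ :=
  ∑ k ∈ Finset.range (n + 1), (n.choose k : ℝ) * (-x) ^ k / (k.factorial : ℝ)

open Finset Nat

theorem HasSum.sum_antidiagonal {A α : Type*} [AddCommMonoid A] [HasAntidiagonal A]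
    [AddCommMonoid α] [TopologicalSpace α] [ContinuousAdd α] [RegularSpace α]
    {f : A × A → α} {a : α} (h : HasSum f a) :
    HasSum (fun n => ∑ kl ∈ antidiagonal n, f kl) a :=
  (HasAntidiagonal.sigmaAntidiagonalEquivProd.hasSum_iff.mpr h).sigma fun n =>
    (antidiagonal n).hasSum f

noncomputable def laguerreDoubleTerm (r x : ℝ) (p : ℕ × ℕ) : ℝ :=
  (-x * r) ^ p.1 / p.1 ! * ((p.2 + p.1).choose p.1 * r ^ p.2)

theorem sum_antidiagonal_laguerreDoubleTerm (r x : ℝ) (n : ℕ) :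
    ∑ km ∈ antidiagonal n, laguerreDoubleTerm r x km = r ^ n * laguerre n x := by
  rw [Nat.sum_antidiagonal_eq_sum_range_succ_mk, laguerre, mul_sum]
  refine sum_congr rfl fun k hk => ?_
  have hkn : n - k + k = n := Nat.sub_add_cancel (Nat.le_of_lt_succ (mem_range.mp hk))
  rw [laguerreDoubleTerm, hkn, mul_pow, ← pow_sub_mul_pow r (Nat.le_of_lt_succ (mem_range.mp hk))]
  ring

theorem abs_laguerreDoubleTerm (r x : ℝ) (p : ℕ × ℕ) :
    |laguerreDoubleTerm r x p| = laguerreDoubleTerm |r| (-|x|) p := by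
  simp only [laguerreDoubleTerm, abs_mul, abs_div, abs_pow, abs_neg, neg_neg, Nat.abs_cast]

section LaguerreGeneratingFunction

variable {r : ℝ}

theorem hasSum_laguerreDoubleTerm_fiber (hr : |r| < 1) (x : ℝ) (k : ℕ) :
    HasSum (fun m => laguerreDoubleTerm r x (k, m))
      ((1 - r)⁻¹ * ((-x * r / (1 - r)) ^ k / k !)) := by
  have h1r : 1 - r ≠ 0 := by linarith [le_abs_self r]
  have hval : (1 - r)⁻¹ * ((-x * r / (1 - r)) ^ k / k !) =
      (-x * r) ^ k / k ! * (1 / (1 - r) ^ (k + 1)) := by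
    rw [div_pow, pow_succ]
    field_simp
  have hr_norm : ‖r‖ < 1 := by rwa [Real.norm_eq_abs]
  rw [hval]
  exact (hasSum_choose_mul_geometric_of_norm_lt_one k hr_norm).mul_left _

theorem summable_laguerreDoubleTerm (hr : |r| < 1) (x : ℝ) :
    Summable (laguerreDoubleTerm r x) := by
  have hr' : |(|r|)| < 1 := by rwa [abs_abs]
  refine summable_abs_iff.mp ?_
  simp_rw [abs_laguerreDoubleTerm]
  rw [summable_prod_of_nonneg fun p => by rw [← abs_laguerreDoubleTerm]; positivity]
  refine ⟨fun k => (hasSum_laguerreDoubleTerm_fiber hr' _ k).summable, ?_⟩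
  simp_rw [(hasSum_laguerreDoubleTerm_fiber hr' _ _).tsum_eq]
  exact (Real.summable_pow_div_factorial _).mul_left _

theorem hasSum_laguerreDoubleTerm (hr : |r| < 1) (x : ℝ) :
    HasSum (laguerreDoubleTerm r x) ((1 - r)⁻¹ * Real.exp (-x * r / (1 - r))) := by
  have hexp := (NormedSpace.expSeries_div_hasSum_exp (-x * r / (1 - r))).mul_left (1 - r)⁻¹
  rw [← Real.exp_eq_exp_ℝ] at hexp
  have hsum := (summable_laguerreDoubleTerm hr x).hasSum
  rwa [(hsum.prod_fiberwise (hasSum_laguerreDoubleTerm_fiber hr x)).unique hexp] at hsum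

theorem hasSum_pow_mul_laguerre (hr : |r| < 1) (x : ℝ) :
    HasSum (fun n => r ^ n * laguerre n x) ((1 - r)⁻¹ * Real.exp (-x * r / (1 - r))) := by
  simpa only [sum_antidiagonal_laguerreDoubleTerm] using
    (hasSum_laguerreDoubleTerm hr x).sum_antidiagonal

end LaguerreGeneratingFunction

theorem stmt7 (ν t : ℝ) (hν : 0 < ν) (ht : 0 < t) (z w : ℂ) :
    Summable (fun k : ℕ => Real.exp (-ν * t * k) * laguerre k (ν * ‖z - w‖ ^ 2)) ∧
    ((Real.pi / ν : ℝ) : ℂ) * Complex.exp ((ν : ℂ) * z * (starRingEnd ℂ w)) *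
        ((∑' k : ℕ, Real.exp (-ν * t * k) * laguerre k (ν * ‖z - w‖ ^ 2) : ℝ) : ℂ) =
      ((Real.pi : ℝ) : ℂ) * Complex.exp ((ν : ℂ) * z * (starRingEnd ℂ w)) /
          (((ν * (1 - Real.exp (-ν * t)) : ℝ)) : ℂ) *
        Complex.exp (-(((ν * ‖z - w‖ ^ 2 * Real.exp (-ν * t) / (1 - Real.exp (-ν * t))) : ℝ) : ℂ)) := by
  set r := Real.exp (-ν * t)
  set x := ν * ‖z - w‖ ^ 2
  have hr0 : 0 < r := Real.exp_pos _
  have hr1 : r < 1 := Real.exp_lt_one_iff.mpr (by nlinarith)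
  have hpow (k : ℕ) : Real.exp (-ν * t * k) = r ^ k := by
    rw [← Real.exp_nat_mul]
    ring_nf
  have hsum : HasSum (fun k : ℕ => Real.exp (-ν * t * k) * laguerre k x)
      ((1 - r)⁻¹ * Real.exp (-x * r / (1 - r))) := by
    simpa only [hpow] using hasSum_pow_mul_laguerre (by rwa [abs_of_pos hr0]) x
  refine ⟨hsum.summable, ?_⟩
  rw [hsum.tsum_eq]
  have h1r : (1 : ℂ) - r ≠ 0 := by exact_mod_cast (sub_pos.mpr hr1).ne'
  have hν' : (ν : ℂ) ≠ 0 := by exact_mod_cast hν.ne'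
  push_cast
  rw [neg_mul, neg_div]
  field_simp
end

section
/- For every x ∈ ℝ and every s ∈ ℂ, the series ∑_{k=0}^∞ H_{k+1}(x) s^k / (k! (k+1)^{3/2}) converges absolutely, the integral on the right-hand side below converges, and ∑_{k=0}^∞ H_{k+1}(x) s^k / (k! (k+1)^{3/2}) = (2/√π) ∫_0^∞ √t e^{−t} exp(2 x s e^{−t} − s² e^{−2t}) · 2(x − s e^{−t}) dt. -/
/-!
Let `g(u) = exp(2xu - u²)`. Differentiating `g' = 2(x - u) g` repeatedly and evaluating at `u = 0`
gives the Hermite recurrence, so `H_n(x) = g⁽ⁿ⁾(0)`; since `g'` is entire, its Taylor series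
`∑ H_{k+1}(x) u^k / k!` converges absolutely to `g'(u) = 2(x - u) g(u)` everywhere.
Substituting `u = s e^{-t}` writes the integrand as `∑ₖ aₖ t^{1/2} e^{-(k+1)t}` with
`aₖ = H_{k+1}(x) s^k / k!`, and integrating
term by term (a Mellin transform of a Dirichlet-type series) yields
`Γ(3/2) ∑ₖ aₖ (k+1)^{-3/2}` with `Γ(3/2) = √π / 2`.
-/

open MeasureTheory

/-- The physicists' Hermite polynomials, evaluated at complex arguments:
`H_0 = 1`, `H_1(x) = 2x`, `H_{n+1}(x) = 2x H_n(x) − 2n H_{n−1}(x)`. -/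
noncomputable def hermiteC : ℕ → ℂ → ℂ
  | 0, _ => 1
  | 1, x => 2 * x
  | (n + 2), x => 2 * x * hermiteC (n + 1) x - 2 * ((n : ℂ) + 1) * hermiteC n x

open Complex Set

noncomputable def hermiteGen (x u : ℂ) : ℂ := cexp (2 * x * u - u ^ 2)

section GeneratingFunction

variable (x : ℂ)

theorem hasDerivAt_hermiteGen (u : ℂ) :
    HasDerivAt (hermiteGen x) (hermiteGen x u * (2 * (x - u))) u := by
  have h : HasDerivAt (fun u => 2 * x * u - u ^ 2) (2 * (x - u)) u := by
    refine (((hasDerivAt_id u).const_mul (2 * x)).fun_sub (hasDerivAt_pow 2 u)).congr_deriv ?_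
    push_cast
    ring
  exact h.cexp

theorem contDiff_hermiteGen : ContDiff ℂ ⊤ (hermiteGen x) := by
  unfold hermiteGen; fun_prop

theorem hasDerivAt_iteratedDeriv_hermiteGen (n : ℕ) (u : ℂ) :
    HasDerivAt (iteratedDeriv n (hermiteGen x)) (iteratedDeriv (n + 1) (hermiteGen x) u) u := by
  rw [iteratedDeriv_succ]
  exact ((contDiff_hermiteGen x).differentiable_iteratedDeriv n
    (WithTop.coe_lt_top _)).differentiableAt.hasDerivAt

theorem iteratedDeriv_one_hermiteGen :
    iteratedDeriv 1 (hermiteGen x) = fun u => 2 * (x - u) * hermiteGen x u := by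
  ext u
  rw [iteratedDeriv_one, (hasDerivAt_hermiteGen x u).deriv, mul_comm]

theorem iteratedDeriv_add_two_hermiteGen (n : ℕ) (u : ℂ) :
    iteratedDeriv (n + 2) (hermiteGen x) u =
      2 * (x - u) * iteratedDeriv (n + 1) (hermiteGen x) u
        - 2 * ((n : ℂ) + 1) * iteratedDeriv n (hermiteGen x) u := by
  have hlin (v : ℂ) : HasDerivAt (fun w => 2 * (x - w)) (-2) v := by
    simpa using ((hasDerivAt_id v).const_sub x).const_mul 2
  induction n generalizing u with
  | zero =>
    have h := (hlin u).fun_mul (hasDerivAt_hermiteGen x u)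
    rw [← iteratedDeriv_one_hermiteGen] at h
    rw [(hasDerivAt_iteratedDeriv_hermiteGen x 1 u).unique h, iteratedDeriv_one_hermiteGen,
      iteratedDeriv_zero]
    push_cast
    ring
  | succ n ih =>
    have h := ((hlin u).fun_mul (hasDerivAt_iteratedDeriv_hermiteGen x (n + 1) u)).fun_sub
      ((hasDerivAt_iteratedDeriv_hermiteGen x n u).const_mul (2 * ((n : ℂ) + 1)))
    rw [← funext ih] at h
    rw [(hasDerivAt_iteratedDeriv_hermiteGen x (n + 2) u).unique h]
    push_cast
    ring

theorem iteratedDeriv_hermiteGen_zero : ∀ n, iteratedDeriv n (hermiteGen x) 0 = hermiteC n x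
  | 0 => by simp [hermiteGen, hermiteC]
  | 1 => by rw [iteratedDeriv_one_hermiteGen]; simp [hermiteGen, hermiteC]
  | n + 2 => by
    rw [iteratedDeriv_add_two_hermiteGen, iteratedDeriv_hermiteGen_zero (n + 1),
      iteratedDeriv_hermiteGen_zero n, hermiteC, sub_zero]

theorem hasSum_hermiteC_succ (u : ℂ) :
    HasSum (fun k : ℕ => hermiteC (k + 1) x * u ^ k / k.factorial) (deriv (hermiteGen x) u) := by
  have hD : Differentiable ℂ (deriv (hermiteGen x)) := by
    simpa using (contDiff_hermiteGen x).differentiable_iteratedDeriv 1 (WithTop.coe_lt_top _)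
  refine (Complex.hasSum_taylorSeries_of_entire hD 0 u).congr_fun fun k => ?_
  rw [← iteratedDeriv_succ', iteratedDeriv_hermiteGen_zero, sub_zero, smul_eq_mul, smul_eq_mul]
  field_simp

theorem summable_norm_hermiteC_succ (u : ℂ) :
    Summable (fun k : ℕ => ‖hermiteC (k + 1) x * u ^ k / k.factorial‖) :=
  summable_norm_iff.mpr (hasSum_hermiteC_succ x u).summable

end GeneratingFunction

theorem mellin_ofReal_eq_integral_rpow_mul (f : ℝ → ℂ) (σ : ℝ) :
    mellin f σ = ∫ t in Ioi 0, ((t ^ (σ - 1) : ℝ) : ℂ) * f t := by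
  refine setIntegral_congr_fun measurableSet_Ioi fun t ht => ?_
  rw [smul_eq_mul, ofReal_cpow (le_of_lt ht), ofReal_sub, ofReal_one]

theorem summable_norm_div_natCast_add_one_rpow {a : ℕ → ℂ} (ha : Summable (‖a ·‖)) {σ : ℝ}
    (hσ : 0 ≤ σ) : Summable fun k : ℕ => ‖a k‖ / ((k : ℝ) + 1) ^ σ :=
  ha.of_nonneg_of_le (fun k => by positivity) fun k =>
    div_le_self (norm_nonneg _) (Real.one_le_rpow (by simp) hσ)

theorem integrableOn_rpow_mul_exp_mul_comp {σ : ℝ} (hσ : 0 < σ) {h : ℂ → ℂ} (hh : Continuous h)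
    (s : ℂ) :
    IntegrableOn (fun t : ℝ => ((t ^ (σ - 1) : ℝ) : ℂ) * (Real.exp (-t) * h (s * Real.exp (-t))))
      (Ioi 0) := by
  obtain ⟨C, hC⟩ := (isCompact_closedBall (0 : ℂ) ‖s‖).exists_bound_of_continuousOn
    hh.continuousOn
  have hbound (t : ℝ) (ht : t ∈ Ioi 0) : ‖h (s * Real.exp (-t))‖ ≤ C := by
    refine hC _ (mem_closedBall_zero_iff.mpr ?_)
    rw [norm_mul, norm_real, Real.norm_of_nonneg (Real.exp_nonneg _)]
    exact mul_le_of_le_one_right (norm_nonneg s) (Real.exp_le_one_iff.mpr (by simpa using ht.le))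
  have hGamma : IntegrableOn (fun t : ℝ => ((Real.exp (-t) * t ^ (σ - 1) : ℝ) : ℂ)) (Ioi 0) :=
    (Real.GammaIntegral_convergent hσ).ofReal
  refine (hGamma.mul_bdd (by fun_prop) (ae_restrict_of_forall_mem measurableSet_Ioi hbound)).congr
    (Filter.Eventually.of_forall fun t => ?_)
  simp only [Complex.ofReal_mul]
  ring

theorem hasSum_hermiteC_succ_mellin (x s : ℂ) {σ : ℝ} (hσ : 0 < σ) :
    HasSum (fun k : ℕ => (Real.Gamma σ : ℂ) * (hermiteC (k + 1) x * s ^ k / k.factorial) /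
        (((k : ℝ) + 1) ^ σ : ℝ))
      (∫ t in Ioi 0, ((t ^ (σ - 1) : ℝ) : ℂ) *
        (Real.exp (-t) * deriv (hermiteGen x) (s * Real.exp (-t)))) := by
  have hterm (t : ℝ) (k : ℕ) : (Real.exp (-t) : ℂ) * (hermiteC (k + 1) x * (s * Real.exp (-t)) ^ k
      / k.factorial) = hermiteC (k + 1) x * s ^ k / k.factorial * Real.exp (-((k : ℝ) + 1) * t) := by
    rw [show -((k : ℝ) + 1) * t = k * -t + -t by ring, Real.exp_add, Real.exp_nat_mul]
    push_cast
    ring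
  have h := hasSum_mellin (p := fun k : ℕ => (k : ℝ) + 1) (s := σ)
    (fun k => Or.inr (by positivity)) (by simpa using hσ)
    (fun t _ => by simpa only [hterm] using
      (hasSum_hermiteC_succ x (s * Real.exp (-t))).mul_left (Real.exp (-t) : ℂ))
    (by simpa using summable_norm_div_natCast_add_one_rpow (summable_norm_hermiteC_succ x s) hσ.le)
  rw [mellin_ofReal_eq_integral_rpow_mul] at h
  refine h.congr_fun fun k => ?_
  rw [Complex.Gamma_ofReal, ofReal_cpow (by positivity)]

theorem Real.Gamma_three_halves : Real.Gamma (3 / 2) = √Real.pi / 2 := by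
  simpa [-one_div, show (1 : ℝ) + 1 / 2 = 3 / 2 by norm_num] using Real.Gamma_nat_add_one_add_half 0

theorem stmt8 (x : ℝ) (s : ℂ) :
    Summable (fun k : ℕ =>
      ‖hermiteC (k + 1) (x : ℂ) * s ^ k /
        ((k.factorial : ℂ) * (((((k : ℝ) + 1) ^ ((3 : ℝ) / 2) : ℝ)) : ℂ))‖) ∧
    IntegrableOn (fun t : ℝ =>
      ((Real.sqrt t * Real.exp (-t) : ℝ) : ℂ) *
        (Complex.exp (2 * (x : ℂ) * s * ((Real.exp (-t) : ℝ) : ℂ)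
            - s ^ 2 * ((Real.exp (-2 * t) : ℝ) : ℂ)) *
          (2 * ((x : ℂ) - s * ((Real.exp (-t) : ℝ) : ℂ))))) (Set.Ioi 0) ∧
    (∑' k : ℕ, hermiteC (k + 1) (x : ℂ) * s ^ k /
        ((k.factorial : ℂ) * (((((k : ℝ) + 1) ^ ((3 : ℝ) / 2) : ℝ)) : ℂ))) =
      ((2 / Real.sqrt Real.pi : ℝ) : ℂ) *
        ∫ t in Set.Ioi (0 : ℝ),
          ((Real.sqrt t * Real.exp (-t) : ℝ) : ℂ) *
            (Complex.exp (2 * (x : ℂ) * s * ((Real.exp (-t) : ℝ) : ℂ)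
                - s ^ 2 * ((Real.exp (-2 * t) : ℝ) : ℂ)) *
              (2 * ((x : ℂ) - s * ((Real.exp (-t) : ℝ) : ℂ)))) := by
  have hintegrand : (fun t : ℝ => ((Real.sqrt t * Real.exp (-t) : ℝ) : ℂ) *
      (Complex.exp (2 * (x : ℂ) * s * ((Real.exp (-t) : ℝ) : ℂ)
          - s ^ 2 * ((Real.exp (-2 * t) : ℝ) : ℂ)) *
        (2 * ((x : ℂ) - s * ((Real.exp (-t) : ℝ) : ℂ))))) = fun t =>
      ((t ^ ((3 / 2 : ℝ) - 1) : ℝ) : ℂ) *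
        (Real.exp (-t) * deriv (hermiteGen x) (s * Real.exp (-t))) := by
    ext t
    rw [(hasDerivAt_hermiteGen _ _).deriv, hermiteGen, Real.sqrt_eq_rpow,
      show -2 * t = -t + -t by ring, Real.exp_add, show (3 / 2 : ℝ) - 1 = 1 / 2 by norm_num]
    push_cast
    ring_nf
  have hmellin := hasSum_hermiteC_succ_mellin x s (σ := 3 / 2) (by norm_num)
  rw [hintegrand]
  refine ⟨?_, integrableOn_rpow_mul_exp_mul_comp (by norm_num)
    ((contDiff_hermiteGen x).continuous_deriv le_top) s, ?_⟩
  · refine (summable_norm_div_natCast_add_one_rpow (summable_norm_hermiteC_succ x s)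
      (σ := 3 / 2) (by norm_num)).congr fun k => ?_
    rw [← div_div, norm_div _ (ofReal _), norm_real, Real.norm_of_nonneg (by positivity)]
  · rw [← hmellin.tsum_eq, ← tsum_mul_left, Real.Gamma_three_halves]
    refine tsum_congr fun k => ?_
    push_cast
    field_simp
end

section
/- Let m ≥ 2 be an integer. Then for every t ≥ 0, ϖ_m(t) ≤ (π/8)^{m−1} t^{(3m−2)/2} e^{−t}. (Here π/8 = B(3/2, 3/2) is the value of the Beta function at (3/2, 3/2).) -/
/-!
Convolving a function bounded by `C s^p e^{-s}` (with `p ≥ 1/2`) against `√y e^{-c y}` with `c ≥ 1`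
uses `(t-y)^p ≤ t^{p-1/2} √(t-y)` and `e^{-(t-y)-cy} ≤ e^{-t}`, which leaves the Beta integral
`∫_0^t √(t-y) √y dy = B(3/2,3/2) t² = π t² / 8`. Each convolution step therefore multiplies the
constant by `π/8` and raises the power of `t` by `3/2`, starting from `ϖ_1(t) = t^{1/2} e^{-t}`.
-/

open MeasureTheory

/-- The convolution `(f * g)(x) = ∫_0^x f(x−y) g(y) dy` of functions on `[0,∞)`. -/
noncomputable def rconv (f g : ℝ → ℝ) (x : ℝ) : ℝ := ∫ y in (0 : ℝ)..x, f (x - y) * g y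

/-- The iterated convolution `ϖ_m = (√t e^{−t}) * (√t e^{−2t}) * ⋯ * (√t e^{−mt})`
(meaningful for `m ≥ 1`; the value at `0` is junk). -/
noncomputable def varpi : ℕ → ℝ → ℝ
  | 0 => fun _ => 0
  | 1 => fun t => Real.sqrt t * Real.exp (-t)
  | (m + 2) => rconv (varpi (m + 1)) (fun t => Real.sqrt t * Real.exp (-((m : ℝ) + 2) * t))

open Real

theorem integral_sqrt_sub_mul_sqrt {t : ℝ} (ht : 0 ≤ t) :
    ∫ y in (0 : ℝ)..t, √(t - y) * √y = π / 8 * t ^ 2 := by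
  rcases ht.eq_or_lt with rfl | ht
  · simp
  have hsub : ∫ x in (-1 : ℝ)..1, √(t - (t / 2 * x + t / 2)) * √(t / 2 * x + t / 2) =
      (t / 2)⁻¹ * ∫ y in (0 : ℝ)..t, √(t - y) * √y := by
    rw [intervalIntegral.integral_comp_mul_add (fun y => √(t - y) * √y) (by positivity : t / 2 ≠ 0),
      smul_eq_mul]
    congr 2 <;> ring
  have hcircle : ∫ x in (-1 : ℝ)..1, √(t - (t / 2 * x + t / 2)) * √(t / 2 * x + t / 2) =
      t / 2 * ∫ x in (-1 : ℝ)..1, √(1 - x ^ 2) := by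
    rw [← intervalIntegral.integral_const_mul]
    refine intervalIntegral.integral_congr fun x hx => ?_
    rw [Set.uIcc_of_le (by norm_num)] at hx
    have hscale : t / 2 * √(1 - x ^ 2) = √((t / 2) ^ 2 * (1 - x ^ 2)) := by
      rw [sqrt_mul (sq_nonneg _), sqrt_sq (by positivity)]
    rw [hscale, ← sqrt_mul (by nlinarith [hx.2])]
    congr 1; ring
  rw [hcircle, integral_sqrt_one_sub_sq] at hsub
  field_simp at hsub
  linarith

theorem rpow_le_rpow_sub_half_mul_sqrt {s t p : ℝ} (hs : 0 ≤ s) (hst : s ≤ t) (hp : 1 / 2 ≤ p) :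
    s ^ p ≤ t ^ (p - 1 / 2) * √s := by
  calc s ^ p = s ^ (p - 1 / 2) * √s := by
        rw [sqrt_eq_rpow, ← rpow_add_of_nonneg hs (by linarith) (by norm_num), sub_add_cancel]
    _ ≤ t ^ (p - 1 / 2) * √s := by gcongr

theorem rconv_sqrt_mul_exp_le {f : ℝ → ℝ} {C p c t : ℝ} (hC : 0 ≤ C) (hp : 1 / 2 ≤ p)
    (hc : 1 ≤ c) (hf_nonneg : ∀ s, 0 ≤ s → 0 ≤ f s)
    (hf : ∀ s, 0 ≤ s → f s ≤ C * s ^ p * exp (-s)) (ht : 0 ≤ t) :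
    rconv f (fun y => √y * exp (-c * y)) t ≤ C * (π / 8) * t ^ (p + 3 / 2) * exp (-t) := by
  set K := C * t ^ (p - 1 / 2) * exp (-t)
  have hbound : ∀ y ∈ Set.Ioc 0 t, f (t - y) * (√y * exp (-c * y)) ≤ K * (√(t - y) * √y) := by
    intro y ⟨hy, hyt⟩
    have hexp : exp (-(t - y)) * exp (-c * y) ≤ exp (-t) := by
      rw [← exp_add]; gcongr; nlinarith
    calc f (t - y) * (√y * exp (-c * y))
        ≤ C * (t - y) ^ p * exp (-(t - y)) * (√y * exp (-c * y)) := by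
          gcongr; exact hf _ (by linarith)
      _ = C * (t - y) ^ p * √y * (exp (-(t - y)) * exp (-c * y)) := by ring
      _ ≤ C * (t ^ (p - 1 / 2) * √(t - y)) * √y * exp (-t) := by
          gcongr
          exact rpow_le_rpow_sub_half_mul_sqrt (by linarith) (by linarith) hp
      _ = K * (√(t - y) * √y) := by ring
  have hmono : rconv f (fun y => √y * exp (-c * y)) t ≤ ∫ y in (0 : ℝ)..t, K * (√(t - y) * √y) := by
    rw [rconv, intervalIntegral.integral_of_le ht, intervalIntegral.integral_of_le ht]
    refine setIntegral_mono_of_nonneg (fun y hy => ?_) hbound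
      (Continuous.integrableOn_Ioc (by fun_prop))
    exact mul_nonneg (hf_nonneg _ (by linarith [hy.2])) (by positivity)
  rcases ht.eq_or_lt with rfl | ht
  · simp [rconv, zero_rpow (by linarith : p + 3 / 2 ≠ 0)]
  have hpow : t ^ (p - 1 / 2) * t ^ 2 = t ^ (p + 3 / 2) := by
    rw [← rpow_natCast, ← rpow_add ht]; norm_num; ring_nf
  calc _ ≤ _ := hmono
    _ = C * (π / 8) * (t ^ (p - 1 / 2) * t ^ 2) * exp (-t) := by
      rw [intervalIntegral.integral_const_mul, integral_sqrt_sub_mul_sqrt ht.le]; ring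
    _ = _ := by rw [hpow]

theorem varpi_succ_succ (m : ℕ) :
    varpi (m + 2) = rconv (varpi (m + 1)) (fun t => √t * exp (-((m : ℝ) + 2) * t)) := rfl

theorem varpi_succ_nonneg (m : ℕ) {t : ℝ} (ht : 0 ≤ t) : 0 ≤ varpi (m + 1) t := by
  induction m generalizing t with
  | zero => exact mul_nonneg (sqrt_nonneg t) (exp_pos _).le
  | succ m ih =>
    rw [varpi_succ_succ]
    refine intervalIntegral.integral_nonneg ht fun y hy => ?_
    exact mul_nonneg (ih (by linarith [hy.2])) (by positivity)

theorem varpi_succ_le (m : ℕ) {t : ℝ} (ht : 0 ≤ t) :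
    varpi (m + 1) t ≤ (π / 8) ^ m * t ^ ((3 * m + 1) / 2 : ℝ) * exp (-t) := by
  induction m generalizing t with
  | zero => simp [varpi, sqrt_eq_rpow]
  | succ m ih =>
    rw [varpi_succ_succ, pow_succ]
    have hm : (0 : ℝ) ≤ m := m.cast_nonneg
    convert rconv_sqrt_mul_exp_le (c := (m : ℝ) + 2) (by positivity) (by linarith) (by linarith)
      (fun _ => varpi_succ_nonneg m) (fun _ => ih) ht using 3
    congr 1; push_cast; ring

theorem stmt11 (m : ℕ) (hm : 2 ≤ m) :
    ∀ t : ℝ, 0 ≤ t →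
      varpi m t ≤ (Real.pi / 8) ^ (m - 1) * t ^ ((3 * (m : ℝ) - 2) / 2) * Real.exp (-t) := by
  intro t ht
  obtain ⟨k, rfl⟩ : ∃ k, m = k + 1 := ⟨m - 1, by omega⟩
  convert varpi_succ_le k ht using 4
  · simp
  · push_cast; ring
end
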